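/- Fix a real c with 0 < c < 1, and let G₁ and G₂ be two independent random graphs on vertex set {1,…,n}, each distributed as G(n, p) with p = c/n; colour the edges of G₁ red and the edges of G₂ blue. Then the probability that the coloured graph G = G₁ ∪ G₂ contains an odd bicycle tends to 0 as n → ∞. -/

import Mathlib

open Filter Finset

open scoped Classical

/-- Two hypergraphs (given by their edge sets) on the vertex set `{1,…,n}`
admit disjoint covers. -/
def DisjointCovers {n : ℕ} (H₁ H₂ : Finset (Finset (Fin n))) : Prop :=
  ∃ C₁ C₂ : Finset (Fin n), Disjoint C₁ C₂ ∧
    (∀ e ∈ H₁, ∃ v ∈ e, v ∈ C₁) ∧ (∀ e ∈ H₂, ∃ v ∈ e, v ∈ C₂)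

/-- All possible edges of a `k`-uniform hypergraph on `{1,…,n}`. -/
noncomputable def allEdges (n k : ℕ) : Finset (Finset (Fin n)) :=
  Finset.univ.filter (fun e => e.card = k)

/-- The probability, under two independent copies of the binomial random
`k`-uniform hypergraph `H_k(n,p)` (each possible edge present independently
with probability `p`), that the pair `(H₁, H₂)` satisfies `P`. -/
noncomputable def probPair (n k : ℕ) (p : ℝ)
    (P : Finset (Finset (Fin n)) → Finset (Finset (Fin n)) → Prop) : ℝ :=
  ∑ H₁ ∈ (allEdges n k).powerset, ∑ H₂ ∈ (allEdges n k).powerset,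
    if P H₁ H₂ then
      (p ^ H₁.card * (1 - p) ^ ((allEdges n k).card - H₁.card)) *
        (p ^ H₂.card * (1 - p) ^ ((allEdges n k).card - H₂.card))
    else 0

/-- The colour of the `i`-th edge of an alternating sequence whose first edge
has colour `b` (`true` = red, `false` = blue). -/
def altColour (b : Bool) (i : ℕ) : Bool := if Even i then b else !b

/-- `v 0, …, v (m-1)` (with `m` odd, `m ≥ 3`) is an odd alternating cycle in
the coloured graph with red edge set `H₁` and blue edge set `H₂`: the vertices
are distinct, consecutive edge colours alternate around the cycle, and the two
edges at `v 0` both have the same colour `b`. -/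
def IsOddAltCycle {n : ℕ} (H₁ H₂ : Finset (Finset (Fin n))) (b : Bool) (m : ℕ)
    (v : ℕ → Fin n) : Prop :=
  Odd m ∧ 3 ≤ m ∧ (∀ i < m, ∀ j < m, v i = v j → i = j) ∧
  ∀ i < m, ({v i, v ((i + 1) % m)} : Finset (Fin n)) ∈
    (if altColour b i then H₁ else H₂)

/-- The coloured graph with red edges `H₁` and blue edges `H₂` contains an odd
bicycle: two vertex-disjoint odd alternating cycles `v` and `u`, on each of
which the two edges at the initial vertex have the same colour (`b₁`, resp.
`b₂`), together with an alternating path `w 0 = v 0, …, w (r+1) = u 0` whose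
first edge has colour distinct from `b₁` and whose last edge has colour
distinct from `b₂`. -/
def OddBicycle {n : ℕ} (H₁ H₂ : Finset (Finset (Fin n))) : Prop :=
  ∃ (b₁ b₂ : Bool) (p q : ℕ) (v u : ℕ → Fin n),
    IsOddAltCycle H₁ H₂ b₁ p v ∧ IsOddAltCycle H₁ H₂ b₂ q u ∧
    (∀ i < p, ∀ j < q, v i ≠ u j) ∧
    ∃ (r : ℕ) (w : ℕ → Fin n),
      w 0 = v 0 ∧ w (r + 1) = u 0 ∧
      (∀ i ≤ r, ({w i, w (i + 1)} : Finset (Fin n)) ∈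
        (if altColour (!b₁) i then H₁ else H₂)) ∧
      altColour (!b₁) r = !b₂

/-!
Start at the first cycle of an odd bicycle, walk around it, then along the path and around the
second cycle, and stop at the first vertex that repeats an earlier one after the first cycle has
closed. This gives an alternating walk `x 0, …, x ℓ` with `x j = x 0` for an odd `j` and
`x ℓ = x b` for some `b < ℓ`, all other vertices being distinct. The only coincidence among
`x 0, …, x (ℓ - 1)` pairs positions of different parity, so the `ℓ` edges are distinct within
each colour class and the walk is present with probability at most `p ^ ℓ`; but it visits only
`ℓ - 1` vertices, so for each starting colour, `j` and `b` there are at most `n ^ (ℓ - 1)`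
candidates. With `p = c / n` the union bound gives
`2 ∑ ℓ² n ^ (ℓ - 1) (c / n) ^ ℓ ≤ (2 / n) ∑ ℓ² c ^ ℓ = O(1 / n)`.
-/

section Weights

variable {α : Type*}

lemma weight_nonneg {p : ℝ} (hp₀ : 0 ≤ p) (hp₁ : p ≤ 1) (E H : Finset α) :
    0 ≤ p ^ #H * (1 - p) ^ (#E - #H) :=
  mul_nonneg (pow_nonneg hp₀ _) (pow_nonneg (sub_nonneg.2 hp₁) _)

variable [DecidableEq α]

lemma sum_weight_filter_superset (p : ℝ) {S E : Finset α} (hS : S ⊆ E) :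
    ∑ H ∈ E.powerset with S ⊆ H, p ^ #H * (1 - p) ^ (#E - #H) = p ^ #S := by
  have hIcc : {H ∈ E.powerset | S ⊆ H} = Icc S E := by
    ext H
    simp [and_comm]
  have hdisj : ∀ K ∈ (E \ S).powerset, Disjoint S K := fun K hK =>
    disjoint_of_subset_right (mem_powerset.1 hK) disjoint_sdiff
  have hinj : Set.InjOn (S ∪ ·) (E \ S).powerset := fun K hK K' hK' h => by
    rw [← union_sdiff_cancel_left (hdisj K hK), ← union_sdiff_cancel_left (hdisj K' hK')]
    exact congrArg (· \ S) h
  have hcard : #E - #S = #(E \ S) := (card_sdiff_of_subset hS).symm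
  rw [hIcc, Icc_eq_image_powerset hS, sum_image hinj]
  calc ∑ K ∈ (E \ S).powerset, p ^ #(S ∪ K) * (1 - p) ^ (#E - #(S ∪ K))
      = ∑ K ∈ (E \ S).powerset, p ^ #S * (p ^ #K * (1 - p) ^ (#(E \ S) - #K)) := by
        refine sum_congr rfl fun K hK => ?_
        rw [card_union_of_disjoint (hdisj K hK), pow_add, Nat.sub_add_eq, hcard]
        ring
    _ = p ^ #S := by rw [← mul_sum, sum_pow_mul_eq_add_pow]; simp

lemma sum_weight_filter_superset_le {p : ℝ} (hp₀ : 0 ≤ p) (S E : Finset α) :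
    ∑ H ∈ E.powerset with S ⊆ H, p ^ #H * (1 - p) ^ (#E - #H) ≤ p ^ #S := by
  by_cases hS : S ⊆ E
  · exact (sum_weight_filter_superset p hS).le
  · rw [filter_false_of_mem fun H hH hSH => hS (hSH.trans (mem_powerset.1 hH)), sum_empty]
    positivity

end Weights

section ProbPair

variable {n k : ℕ} {p : ℝ}

lemma probPair_nonneg (hp₀ : 0 ≤ p) (hp₁ : p ≤ 1)
    (P : Finset (Finset (Fin n)) → Finset (Finset (Fin n)) → Prop) :
    0 ≤ probPair n k p P :=
  sum_nonneg fun H₁ _ => sum_nonneg fun H₂ _ => by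
    split_ifs
    exacts [mul_nonneg (weight_nonneg hp₀ hp₁ _ H₁) (weight_nonneg hp₀ hp₁ _ H₂), le_rfl]

lemma probPair_mono (hp₀ : 0 ≤ p) (hp₁ : p ≤ 1)
    {P Q : Finset (Finset (Fin n)) → Finset (Finset (Fin n)) → Prop}
    (hPQ : ∀ H₁ H₂, P H₁ H₂ → Q H₁ H₂) :
    probPair n k p P ≤ probPair n k p Q :=
  sum_le_sum fun H₁ _ => sum_le_sum fun H₂ _ => by
    split_ifs with hP hQ hQ
    exacts [le_rfl, absurd (hPQ _ _ hP) hQ,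
      mul_nonneg (weight_nonneg hp₀ hp₁ _ H₁) (weight_nonneg hp₀ hp₁ _ H₂), le_rfl]

lemma probPair_exists_le (hp₀ : 0 ≤ p) (hp₁ : p ≤ 1) {ι : Type*} (F : Finset ι)
    (Q : ι → Finset (Finset (Fin n)) → Finset (Finset (Fin n)) → Prop) :
    probPair n k p (fun H₁ H₂ => ∃ z ∈ F, Q z H₁ H₂) ≤ ∑ z ∈ F, probPair n k p (Q z) := by
  simp only [probPair]
  rw [sum_comm (s := F)]
  refine sum_le_sum fun H₁ _ => ?_
  rw [sum_comm (s := F)]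
  refine sum_le_sum fun H₂ _ => ?_
  have hw := mul_nonneg (weight_nonneg hp₀ hp₁ (allEdges n k) H₁)
    (weight_nonneg hp₀ hp₁ (allEdges n k) H₂)
  split_ifs with h
  · obtain ⟨z, hz, hQ⟩ := h
    refine le_of_eq_of_le (if_pos hQ).symm
      (single_le_sum (f := fun z => if Q z H₁ H₂ then _ else 0) (fun z _ => ?_) hz)
    split_ifs
    exacts [hw, le_rfl]
  · exact sum_nonneg fun z _ => by split_ifs; exacts [hw, le_rfl]

lemma probPair_subset_subset_le (hp₀ : 0 ≤ p) (hp₁ : p ≤ 1) (S₁ S₂ : Finset (Finset (Fin n))) :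
    probPair n k p (fun H₁ H₂ => S₁ ⊆ H₁ ∧ S₂ ⊆ H₂) ≤ p ^ (#S₁ + #S₂) := by
  have hprod : probPair n k p (fun H₁ H₂ => S₁ ⊆ H₁ ∧ S₂ ⊆ H₂) =
      (∑ H ∈ (allEdges n k).powerset with S₁ ⊆ H, p ^ #H * (1 - p) ^ (#(allEdges n k) - #H)) *
        ∑ H ∈ (allEdges n k).powerset with S₂ ⊆ H, p ^ #H * (1 - p) ^ (#(allEdges n k) - #H) := by
    rw [sum_filter, sum_filter, sum_mul_sum]
    refine sum_congr rfl fun H₁ _ => sum_congr rfl fun H₂ _ => ?_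
    by_cases h₁ : S₁ ⊆ H₁ <;> by_cases h₂ : S₂ ⊆ H₂ <;> simp [h₁, h₂]
  rw [hprod, pow_add]
  exact mul_le_mul (sum_weight_filter_superset_le hp₀ S₁ _)
    (sum_weight_filter_superset_le hp₀ S₂ _) (sum_nonneg fun _ _ => weight_nonneg hp₀ hp₁ _ _)
    (pow_nonneg hp₀ _)

end ProbPair

section AltColour

lemma altColour_odd {b : Bool} {i : ℕ} (h : Odd i) : altColour b i = !b := by
  simp [altColour, Nat.not_even_iff_odd.2 h]

lemma altColour_succ (b : Bool) (i : ℕ) : altColour b (i + 1) = !altColour b i := by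
  by_cases h : Even i <;> simp [altColour, h, Nat.even_add_one]

lemma altColour_add (b : Bool) (s t : ℕ) :
    altColour b (s + t) = altColour (altColour b s) t := by
  induction t with
  | zero => simp [altColour]
  | succ t ih => rw [← add_assoc, altColour_succ, ih, altColour_succ]

lemma altColour_eq_altColour_iff {b : Bool} {i k : ℕ} :
    altColour b i = altColour b k ↔ i % 2 = k % 2 := by
  simp only [altColour, Nat.even_iff]
  split_ifs <;> cases b <;>
    simp only [Bool.not_true, Bool.not_false, Bool.true_eq_false, Bool.false_eq_true, true_iff,
      false_iff] <;> omega

end AltColour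

section Walks

variable {V : Type*}

def IsAltWalk [DecidableEq V] (H₁ H₂ : Finset (Finset V)) (γ : Bool) (ℓ : ℕ) (x : ℕ → V) :
    Prop :=
  ∀ i < ℓ, ({x i, x (i + 1)} : Finset V) ∈ if altColour γ i then H₁ else H₂

def walkAppend (x : ℕ → V) (ℓ : ℕ) (y : ℕ → V) : ℕ → V :=
  fun i => if i ≤ ℓ then x i else y (i - ℓ)

namespace IsAltWalk

variable [DecidableEq V] {H₁ H₂ : Finset (Finset V)} {γ : Bool} {ℓ : ℕ} {x : ℕ → V}

lemma mono (hx : IsAltWalk H₁ H₂ γ ℓ x) {m : ℕ} (hm : m ≤ ℓ) : IsAltWalk H₁ H₂ γ m x :=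
  fun i hi => hx i (hi.trans_le hm)

lemma congr (hx : IsAltWalk H₁ H₂ γ ℓ x) {y : ℕ → V} (h : ∀ i ≤ ℓ, x i = y i) :
    IsAltWalk H₁ H₂ γ ℓ y := fun i hi => by
  rw [← h i hi.le, ← h (i + 1) hi]
  exact hx i hi

lemma append (hx : IsAltWalk H₁ H₂ γ ℓ x) {m : ℕ} {y : ℕ → V}
    (hy : IsAltWalk H₁ H₂ (altColour γ ℓ) m y) (hxy : x ℓ = y 0) :
    IsAltWalk H₁ H₂ γ (ℓ + m) (walkAppend x ℓ y) := by
  intro i hi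
  rcases lt_or_ge i ℓ with hiℓ | hiℓ
  · simpa [walkAppend, hiℓ.le, Nat.succ_le_of_lt hiℓ] using hx i hiℓ
  obtain ⟨i, rfl⟩ := Nat.exists_eq_add_of_le hiℓ
  have hi : walkAppend x ℓ y (ℓ + i) = y i := by
    rcases i with _ | i
    · simp [walkAppend, hxy]
    · simp [walkAppend]
  have hi' : walkAppend x ℓ y (ℓ + i + 1) = y (i + 1) := by simp [walkAppend, add_assoc]
  rw [hi, hi', altColour_add]
  exact hy i (by omega)

end IsAltWalk

lemma IsOddAltCycle.isAltWalk {n : ℕ} {H₁ H₂ : Finset (Finset (Fin n))} {b : Bool} {m : ℕ}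
    {v : ℕ → Fin n} (h : IsOddAltCycle H₁ H₂ b m v) :
    IsAltWalk H₁ H₂ b m (fun i => v (i % m)) := fun i hi => by
  simpa only [Nat.mod_eq_of_lt hi] using h.2.2.2 i hi

structure IsBicyclicWalk (x : ℕ → V) (ℓ j b : ℕ) : Prop where
  cycle_odd : Odd j
  cycle_lt : j < ℓ
  back_lt : b < ℓ
  back_ne : b ≠ j
  injOn : Set.InjOn x (Set.Iio ℓ \ {j})
  cycle_closed : x j = x 0
  back_eq : x ℓ = x b

namespace IsBicyclicWalk

variable {x : ℕ → V} {ℓ j b : ℕ}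

lemma congr (hx : IsBicyclicWalk x ℓ j b) {y : ℕ → V} (h : ∀ i ≤ ℓ, x i = y i) :
    IsBicyclicWalk y ℓ j b :=
  { hx with
    injOn := hx.injOn.congr fun i hi => h i (Set.mem_Iio.1 hi.1).le
    cycle_closed := by rw [← h j hx.cycle_lt.le, ← h 0 (Nat.zero_le _), hx.cycle_closed]
    back_eq := by rw [← h ℓ le_rfl, ← h b hx.back_lt.le, hx.back_eq] }

lemma eq_or_of_apply_eq (hx : IsBicyclicWalk x ℓ j b) {s t : ℕ} (hs : s < ℓ) (ht : t < ℓ)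
    (h : x s = x t) : s = t ∨ s = 0 ∧ t = j ∨ s = j ∧ t = 0 := by
  have hj := hx.cycle_odd.pos
  have hinj : ∀ {s t}, s < ℓ → t < ℓ → s ≠ j → t ≠ j → x s = x t → s = t :=
    fun hs ht hsj htj h => hx.injOn ⟨hs, hsj⟩ ⟨ht, htj⟩ h
  have hℓ := hx.cycle_lt
  by_cases hsj : s = j <;> by_cases htj : t = j
  · exact .inl (hsj.trans htj.symm)
  · refine .inr (.inr ⟨hsj, (hinj (by omega) ht hj.ne htj ?_).symm⟩)
    rw [← hx.cycle_closed, ← hsj, h]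
  · refine .inr (.inl ⟨hinj hs (by omega) hsj hj.ne ?_, htj⟩)
    rw [h, htj, hx.cycle_closed]
  · exact .inl (hinj hs ht hsj htj h)

lemma edge_inj [DecidableEq V] (hx : IsBicyclicWalk x ℓ j b) {i k : ℕ} (hi : i < ℓ) (hk : k < ℓ)
    (hik : i % 2 = k % 2) (h : ({x i, x (i + 1)} : Finset V) = {x k, x (k + 1)}) : i = k := by
  wlog hle : i ≤ k generalizing i k
  · exact (this hk hi hik.symm h.symm (by omega)).symm
  rcases hle.eq_or_lt with rfl | hlt
  · rfl
  have hj := Nat.odd_iff.1 hx.cycle_odd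
  have hpair := congrArg ((↑) : Finset V → Set V) h
  push_cast at hpair
  rcases Set.pair_eq_pair_iff.1 hpair with ⟨h₁, -⟩ | ⟨-, h₂⟩
  · have := hx.eq_or_of_apply_eq hi hk h₁
    omega
  · have := hx.eq_or_of_apply_eq (by omega : i + 1 < ℓ) hk h₂
    omega

lemma le_card_add_one [Fintype V] (hx : IsBicyclicWalk x ℓ j b) : ℓ ≤ Fintype.card V + 1 := by
  have := card_le_card_of_injOn x (fun _ _ => mem_coe.2 (mem_univ _))
    (s := (range ℓ).erase j) (by simpa using hx.injOn)
  rw [card_erase_of_mem (mem_range.2 hx.cycle_lt), card_range, card_univ] at this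
  omega

end IsBicyclicWalk

lemma exists_isBicyclicWalk_of_apply_eq {x : ℕ → V} {j s t : ℕ} (hj : Odd j)
    (hinj : Set.InjOn x (Set.Iio j)) (hcycle : x j = x 0) (hst : s < t) (hjt : j < t)
    (hxst : x s = x t) :
    ∃ ℓ b, ℓ ≤ t ∧ IsBicyclicWalk x ℓ j b := by
  have hrep : ∃ m, j < m ∧ ∃ s < m, x s = x m := ⟨t, hjt, s, hst, hxst⟩
  set ℓ := Nat.find hrep
  obtain ⟨hjℓ, s₀, hs₀, hxs₀⟩ := Nat.find_spec hrep
  have hnorep : ∀ s t, s < t → t < ℓ → t ≠ j → x s ≠ x t := by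
    intro s t hst htℓ htj hx
    rcases lt_or_gt_of_ne htj with htj | htj
    · exact hst.ne (hinj (hst.trans htj) htj hx)
    · exact Nat.find_min hrep htℓ ⟨htj, s, hst, hx⟩
  have hinjℓ : Set.InjOn x (Set.Iio ℓ \ {j}) := by
    rintro s ⟨hs, hsj⟩ t ⟨ht, htj⟩ hx
    rcases lt_trichotomy s t with hlt | heq | hgt
    · exact absurd hx (hnorep s t hlt ht htj)
    · exact heq
    · exact absurd hx.symm (hnorep t s hgt hs hsj)
  have hℓt : ℓ ≤ t := Nat.find_min' hrep ⟨hjt, s, hst, hxst⟩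
  by_cases hs₀j : s₀ = j
  · exact ⟨ℓ, 0, hℓt, hj, hjℓ, by omega, hj.pos.ne, hinjℓ, hcycle,
      by rw [← hxs₀, hs₀j, hcycle]⟩
  · exact ⟨ℓ, s₀, hℓt, hj, hjℓ, hs₀, hs₀j, hinjℓ, hcycle, hxs₀.symm⟩

lemma card_filter_isBicyclicWalk_le [Fintype V] (ℓ j b : ℕ) :
    #{z : Fin (ℓ + 1) → V | IsBicyclicWalk (fun i => z (Fin.ofNat (ℓ + 1) i)) ℓ j b} ≤
      Fintype.card V ^ (ℓ - 1) := by
  obtain h | ⟨z₀, hz₀⟩ := eq_empty_or_nonempty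
    {z : Fin (ℓ + 1) → V | IsBicyclicWalk (fun i => z (Fin.ofNat (ℓ + 1) i)) ℓ j b}
  · rw [h, card_empty]
    exact Nat.zero_le _
  have hB₀ := (mem_filter.1 hz₀).2
  have hval : ∀ m ≤ ℓ, (Fin.ofNat (ℓ + 1) m : ℕ) = m := fun m hm => by
    rw [Fin.val_ofNat, Nat.mod_eq_of_lt (by omega)]
  let S : Finset (Fin (ℓ + 1)) := ((range ℓ).erase j).attachFin fun m hm => by
    have := mem_range.1 (mem_of_mem_erase hm)
    omega
  have hS : #S = ℓ - 1 := by
    rw [card_attachFin, card_erase_of_mem (mem_range.2 hB₀.cycle_lt), card_range]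
  have hmem : ∀ m < ℓ, m ≠ j → Fin.ofNat (ℓ + 1) m ∈ S := fun m hm hmj => by
    rw [mem_attachFin, hval m hm.le]
    exact mem_erase.2 ⟨hmj, mem_range.2 hm⟩
  calc _ ≤ #(univ : Finset (S → V)) :=
        card_le_card_of_injOn (fun z i => z i) (fun _ _ => mem_coe.2 (mem_univ _)) ?_
    _ = Fintype.card V ^ (ℓ - 1) := by rw [card_univ, Fintype.card_fun, Fintype.card_coe, hS]
  intro z hz z' hz' h
  have hB := (mem_filter.1 hz).2
  have hB' := (mem_filter.1 hz').2
  have hzS : ∀ m < ℓ, m ≠ j → z (Fin.ofNat (ℓ + 1) m) = z' (Fin.ofNat (ℓ + 1) m) :=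
    fun m hm hmj => congrFun h ⟨_, hmem m hm hmj⟩
  funext i
  rw [← Fin.ofNat_val_eq_self i]
  by_cases hij : (i : ℕ) = j
  · rw [hij]
    have h0 := hzS 0 (hB₀.cycle_odd.pos.trans hB₀.cycle_lt) hB₀.cycle_odd.pos.ne
    exact hB.cycle_closed.trans (h0.trans hB'.cycle_closed.symm)
  by_cases hiℓ : (i : ℕ) = ℓ
  · rw [hiℓ]
    exact hB.back_eq.trans ((hzS b hB₀.back_lt hB₀.back_ne).trans hB'.back_eq.symm)
  · exact hzS i (by omega) hij

end Walks

lemma OddBicycle.exists_isBicyclicWalk {n : ℕ} {H₁ H₂ : Finset (Finset (Fin n))}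
    (h : OddBicycle H₁ H₂) : ∃ γ ℓ j b x, IsBicyclicWalk x ℓ j b ∧ IsAltWalk H₁ H₂ γ ℓ x := by
  obtain ⟨b₁, b₂, p, q, v, u, hv, hu, -, r, w, hw0, hwr, hw, hwc⟩ := h
  have hp : Odd p := hv.1
  have hq : 0 < q := by have := hu.2.1; omega
  let T := walkAppend (walkAppend (fun i => v (i % p)) p w) (p + (r + 1)) (fun i => u (i % q))
  have hT : IsAltWalk H₁ H₂ b₁ (p + (r + 1) + q) T := by
    refine (hv.isAltWalk.append ?_ (by simp [hw0])).append ?_ (by simp [walkAppend, hwr])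
    · rw [altColour_odd hp]
      exact fun i hi => hw i (Nat.lt_succ_iff.1 hi)
    · rw [altColour_add, altColour_odd hp, altColour_succ, hwc, Bool.not_not]
      exact hu.isAltWalk
  have hTv : ∀ i ≤ p, T i = v (i % p) := fun i hi => by
    simp [T, walkAppend, hi, show i ≤ p + (r + 1) by omega]
  have hinj : Set.InjOn T (Set.Iio p) := fun i hi i' hi' h => by
    rw [hTv i (le_of_lt hi), hTv i' (le_of_lt hi'), Nat.mod_eq_of_lt hi,
      Nat.mod_eq_of_lt hi'] at h
    exact hv.2.2.1 i hi i' hi' h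
  have hcycle : T p = T 0 := by rw [hTv p le_rfl, hTv 0 (Nat.zero_le _)]; simp
  have hrep : T (p + (r + 1)) = T (p + (r + 1) + q) := by
    simp [T, walkAppend, hwr, hq.ne']
  obtain ⟨ℓ, b, hℓ, hB⟩ :=
    exists_isBicyclicWalk_of_apply_eq hp hinj hcycle (by omega) (by omega) hrep
  exact ⟨b₁, ℓ, p, b, T, hB, hT.mono hℓ⟩

section Bound

variable {n k : ℕ} {p : ℝ}

lemma probPair_isAltWalk_le (hp₀ : 0 ≤ p) (hp₁ : p ≤ 1) (γ : Bool) {ℓ : ℕ} {x : ℕ → Fin n}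
    (hx : ∀ i < ℓ, ∀ i' < ℓ, i % 2 = i' % 2 →
      ({x i, x (i + 1)} : Finset (Fin n)) = {x i', x (i' + 1)} → i = i') :
    probPair n k p (fun H₁ H₂ => IsAltWalk H₁ H₂ γ ℓ x) ≤ p ^ ℓ := by
  let edges (I : Finset ℕ) : Finset (Finset (Fin n)) := I.image fun i => {x i, x (i + 1)}
  let red := {i ∈ range ℓ | altColour γ i = true}
  let blue := {i ∈ range ℓ | ¬altColour γ i = true}
  have hcard : ∀ I ⊆ range ℓ, (∀ i ∈ I, ∀ i' ∈ I, altColour γ i = altColour γ i') →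
      #(edges I) = #I := fun I hI hcol =>
    card_image_of_injOn fun i hi i' hi' h => hx i (mem_range.1 (hI hi)) i' (mem_range.1 (hI hi'))
      (altColour_eq_altColour_iff.1 (hcol i hi i' hi')) h
  have hsub : ∀ H₁ H₂, IsAltWalk H₁ H₂ γ ℓ x → edges red ⊆ H₁ ∧ edges blue ⊆ H₂ := by
    intro H₁ H₂ hw
    constructor <;> intro e he <;> obtain ⟨i, hi, rfl⟩ := mem_image.1 he <;>
      obtain ⟨hiℓ, hγ⟩ := mem_filter.1 hi
    · simpa [hγ] using hw i (mem_range.1 hiℓ)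
    · simpa [hγ] using hw i (mem_range.1 hiℓ)
  calc probPair n k p (fun H₁ H₂ => IsAltWalk H₁ H₂ γ ℓ x)
      ≤ probPair n k p (fun H₁ H₂ => edges red ⊆ H₁ ∧ edges blue ⊆ H₂) :=
        probPair_mono hp₀ hp₁ hsub
    _ ≤ p ^ (#(edges red) + #(edges blue)) := probPair_subset_subset_le hp₀ hp₁ _ _
    _ = p ^ ℓ := by
      rw [hcard red (filter_subset _ _) fun i hi i' hi' => by simp_all [red],
        hcard blue (filter_subset _ _) fun i hi i' hi' => by simp_all [blue],
        card_filter_add_card_filter_not, card_range]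

lemma probPair_exists_isBicyclicWalk_le (hp₀ : 0 ≤ p) (hp₁ : p ≤ 1) (γ : Bool) (ℓ j b : ℕ) :
    probPair n k p (fun H₁ H₂ => ∃ x, IsBicyclicWalk x ℓ j b ∧ IsAltWalk H₁ H₂ γ ℓ x) ≤
      n ^ (ℓ - 1) * p ^ ℓ := by
  let walk (z : Fin (ℓ + 1) → Fin n) (i : ℕ) : Fin n := z (Fin.ofNat (ℓ + 1) i)
  let F : Finset (Fin (ℓ + 1) → Fin n) := {z | IsBicyclicWalk (walk z) ℓ j b}
  have hcover : ∀ H₁ H₂, (∃ x, IsBicyclicWalk x ℓ j b ∧ IsAltWalk H₁ H₂ γ ℓ x) →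
      ∃ z ∈ F, IsAltWalk H₁ H₂ γ ℓ (walk z) := by
    rintro H₁ H₂ ⟨x, hB, hA⟩
    have hx : ∀ i ≤ ℓ, x i = walk (fun m => x m) i := fun i hi => by
      simp only [walk, Fin.val_ofNat, Nat.mod_eq_of_lt (Nat.lt_succ_of_le hi)]
    exact ⟨fun m => x m, mem_filter.2 ⟨mem_univ _, hB.congr hx⟩, hA.congr hx⟩
  calc probPair n k p (fun H₁ H₂ => ∃ x, IsBicyclicWalk x ℓ j b ∧ IsAltWalk H₁ H₂ γ ℓ x)
      ≤ probPair n k p (fun H₁ H₂ => ∃ z ∈ F, IsAltWalk H₁ H₂ γ ℓ (walk z)) :=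
        probPair_mono hp₀ hp₁ hcover
    _ ≤ ∑ z ∈ F, probPair n k p (fun H₁ H₂ => IsAltWalk H₁ H₂ γ ℓ (walk z)) :=
        probPair_exists_le hp₀ hp₁ F _
    _ ≤ ∑ z ∈ F, p ^ ℓ := sum_le_sum fun z hz =>
        probPair_isAltWalk_le hp₀ hp₁ γ fun i hi i' hi' => (mem_filter.1 hz).2.edge_inj hi hi'
    _ ≤ n ^ (ℓ - 1) * p ^ ℓ := by
      rw [sum_const, nsmul_eq_mul]
      gcongr
      exact_mod_cast (card_filter_isBicyclicWalk_le ℓ j b).trans_eq (by rw [Fintype.card_fin])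

lemma probPair_oddBicycle_le (hp₀ : 0 ≤ p) (hp₁ : p ≤ 1) :
    probPair n k p (fun H₁ H₂ => OddBicycle H₁ H₂) ≤
      2 * ∑ ℓ ∈ range (n + 2), (ℓ : ℝ) ^ 2 * (n ^ (ℓ - 1) * p ^ ℓ) := by
  have hcover : ∀ H₁ H₂ : Finset (Finset (Fin n)), OddBicycle H₁ H₂ →
      ∃ γ ∈ univ, ∃ ℓ ∈ range (n + 2), ∃ j ∈ range ℓ, ∃ b ∈ range ℓ,
        ∃ x, IsBicyclicWalk x ℓ j b ∧ IsAltWalk H₁ H₂ γ ℓ x := by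
    intro H₁ H₂ h
    obtain ⟨γ, ℓ, j, b, x, hB, hA⟩ := h.exists_isBicyclicWalk
    have hℓ := hB.le_card_add_one
    rw [Fintype.card_fin] at hℓ
    exact ⟨γ, mem_univ _, ℓ, mem_range.2 (by omega), j, mem_range.2 hB.cycle_lt, b,
      mem_range.2 hB.back_lt, x, hB, hA⟩
  calc probPair n k p (fun H₁ H₂ => OddBicycle H₁ H₂)
    _ ≤ ∑ γ ∈ (univ : Finset Bool), ∑ ℓ ∈ range (n + 2), ∑ j ∈ range ℓ, ∑ b ∈ range ℓ,
          probPair n k p (fun H₁ H₂ => ∃ x, IsBicyclicWalk x ℓ j b ∧ IsAltWalk H₁ H₂ γ ℓ x) := by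
      refine (probPair_mono hp₀ hp₁ hcover).trans ?_
      refine (probPair_exists_le hp₀ hp₁ _ _).trans (sum_le_sum fun γ _ => ?_)
      refine (probPair_exists_le hp₀ hp₁ _ _).trans (sum_le_sum fun ℓ _ => ?_)
      refine (probPair_exists_le hp₀ hp₁ _ _).trans (sum_le_sum fun j _ => ?_)
      exact probPair_exists_le hp₀ hp₁ _ _
    _ ≤ ∑ γ ∈ (univ : Finset Bool), ∑ ℓ ∈ range (n + 2), ∑ j ∈ range ℓ, ∑ b ∈ range ℓ,
          ((n : ℝ) ^ (ℓ - 1) * p ^ ℓ) := by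
      gcongr with γ _ ℓ _ j _ b _
      exact probPair_exists_isBicyclicWalk_le hp₀ hp₁ γ ℓ j b
    _ = 2 * ∑ ℓ ∈ range (n + 2), (ℓ : ℝ) ^ 2 * (n ^ (ℓ - 1) * p ^ ℓ) := by
      simp only [sum_const, card_range, card_univ, Fintype.card_bool, nsmul_eq_mul]
      push_cast
      congr 1
      exact sum_congr rfl fun ℓ _ => by ring

lemma probPair_oddBicycle_le_div {c : ℝ} (hc₀ : 0 ≤ c) (hc₁ : c < 1) (hn : 1 ≤ n) :
    probPair n k (c / n) (fun H₁ H₂ => OddBicycle H₁ H₂) ≤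
      2 * (∑' ℓ : ℕ, (ℓ : ℝ) ^ 2 * c ^ ℓ) / n := by
  have hn' : (1 : ℝ) ≤ n := by exact_mod_cast hn
  have hterm : ∀ ℓ : ℕ, (ℓ : ℝ) ^ 2 * (n ^ (ℓ - 1) * (c / n) ^ ℓ) = ℓ ^ 2 * c ^ ℓ / n := by
    rintro (_ | ℓ)
    · simp
    · rw [Nat.add_sub_cancel, div_pow, pow_succ (n : ℝ)]
      field_simp
  calc probPair n k (c / n) (fun H₁ H₂ => OddBicycle H₁ H₂)
      ≤ 2 * ∑ ℓ ∈ range (n + 2), (ℓ : ℝ) ^ 2 * (n ^ (ℓ - 1) * (c / n) ^ ℓ) :=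
        probPair_oddBicycle_le (by positivity) (div_le_one_of_le₀ (by linarith) (by linarith))
    _ = 2 * (∑ ℓ ∈ range (n + 2), (ℓ : ℝ) ^ 2 * c ^ ℓ) / n := by
      rw [mul_div_assoc, sum_div]
      exact congrArg _ (sum_congr rfl fun ℓ _ => hterm ℓ)
    _ ≤ 2 * (∑' ℓ : ℕ, (ℓ : ℝ) ^ 2 * c ^ ℓ) / n := by
      gcongr
      exact (summable_pow_mul_geometric_of_norm_lt_one 2
        (by rwa [Real.norm_of_nonneg hc₀])).sum_le_tsum _ fun ℓ _ => by positivity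

end Bound

/-- For `0 < c < 1` and two independent random graphs `G(n, c/n)` (red and
blue), the probability that the coloured union contains an odd bicycle tends
to `0`. -/
theorem oddBicycle_prob_tendsto_zero (c : ℝ) (hc0 : 0 < c) (hc1 : c < 1) :
    Filter.Tendsto (fun n => probPair n 2 (c / n) (fun H₁ H₂ => OddBicycle H₁ H₂))
      Filter.atTop (nhds 0) := by
  refine squeeze_zero' ?_ ?_
    (tendsto_const_div_atTop_nhds_zero_nat (2 * ∑' ℓ : ℕ, (ℓ : ℝ) ^ 2 * c ^ ℓ))
  · filter_upwards [eventually_ge_atTop 1] with n hn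
    have hn' : (1 : ℝ) ≤ n := by exact_mod_cast hn
    exact probPair_nonneg (by positivity) (div_le_one_of_le₀ (by linarith) (by linarith)) _
  · filter_upwards [eventually_ge_atTop 1] with n hn
    exact probPair_oddBicycle_le_div hc0.le hc1 hn
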